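/- MIMO pole assignment (Proposition 2.34). Let A ∈ ℝ^{n×n} and B ∈ ℝ^{n×m} be such that the pair (A, B) is controllable, i.e. the n×(nm) matrix [B, AB, …, A^{n−1}B] has rank n. Then for every monic polynomial Δ̄ ∈ ℝ[s] of degree n there exists a matrix K ∈ ℝ^{m×n} such that the characteristic polynomial of A + BK equals Δ̄. -/

import Mathlib

/-!
For a single input `b` that is a cyclic vector of `A`, the matrix determinant lemma gives
`χ_{A + b kᵀ} = χ_A - kᵀ adj(X - A) b`. The coefficients of `adj(X - A) b` are a unitriangular
recombination of `b, A b, …, A^(n-1) b`, so they form a basis and `k` can prescribe the `n` lower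
coefficients of the characteristic polynomial at will.

Heymann's lemma reduces the multi-input case to this one: choosing inputs greedily so that the
states `x 0 = 0`, `x (i + 1) = A x i + B u i` stay linearly independent yields, by
controllability, a basis `x 1, …, x n`, and the feedback `F` with `F (x i) = u i` makes `B u 0` a
cyclic vector of `A + B F`.
-/

noncomputable section
open Matrix Polynomial

/-- The controllability matrix `[B, AB, …, A^(n-1) B]` of the pair `(A, B)`,
as an `n × (n·m)` matrix indexed by `Fin n × Fin m`. -/
def ctrbMat (n m : ℕ) (A : Matrix (Fin n) (Fin n) ℝ) (B : Matrix (Fin n) (Fin m) ℝ) :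
    Matrix (Fin n) (Fin n × Fin m) ℝ :=
  Matrix.of fun i kj => (A ^ (kj.1 : ℕ) * B) i kj.2

open Submodule Set

namespace Matrix

variable {ι : Type*} [Fintype ι] [DecidableEq ι]

theorem det_add_vecMulVec_of_field {K : Type*} [Field K] {M : Matrix ι ι K} (hM : M.det ≠ 0)
    (u v : ι → K) : (M + vecMulVec u v).det = M.det + v ⬝ᵥ M.adjugate *ᵥ u := by
  have hfac : M + vecMulVec u v = M * (1 + vecMulVec (M⁻¹ *ᵥ u) v) := by
    rw [Matrix.mul_add, Matrix.mul_one, mul_vecMulVec, mulVec_mulVec, mul_nonsing_inv _ hM.isUnit,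
      one_mulVec]
  rw [hfac, det_mul, vecMulVec_eq (Fin 1), det_one_add_replicateCol_mul_replicateRow, inv_def,
    smul_mulVec, dotProduct_smul, smul_eq_mul, mul_add, mul_one, Ring.inverse_eq_inv',
    mul_inv_cancel_left₀ hM]

theorem det_add_vecMulVec {R : Type*} [CommRing R] [IsDomain R] {M : Matrix ι ι R}
    (hM : M.det ≠ 0) (u v : ι → R) :
    (M + vecMulVec u v).det = M.det + v ⬝ᵥ M.adjugate *ᵥ u := by
  let f := algebraMap R (FractionRing R)
  have hf : Function.Injective f := IsFractionRing.injective R (FractionRing R)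
  have hmap : (M + vecMulVec u v).map f = M.map f + vecMulVec (f ∘ u) (f ∘ v) := by
    ext; simp [vecMulVec_apply]
  apply hf
  rw [f.map_det, RingHom.mapMatrix_apply, hmap, det_add_vecMulVec_of_field, map_add, f.map_det,
    f.map_dotProduct, ← RingHom.mapMatrix_apply, ← f.map_adjugate]
  · congr 2; ext; exact (f.map_mulVec _ _ _).symm
  · rwa [← RingHom.mapMatrix_apply, ← f.map_det, map_ne_zero_iff _ hf]

theorem charmatrix_add_vecMulVec {R : Type*} [CommRing R] (A : Matrix ι ι R) (b k : ι → R) :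
    charmatrix (A + vecMulVec b k) = charmatrix A + vecMulVec (-(C ∘ b)) (C ∘ k) := by
  ext i j : 1
  by_cases h : i = j <;> simp [vecMulVec_apply, h] <;> ring

theorem coeff_comp_C_dotProduct_mulVec {R : Type*} [CommRing R] (M : Matrix ι ι R[X]) (b k : ι → R)
    (j : ℕ) : ((C ∘ k) ⬝ᵥ M *ᵥ (C ∘ b)).coeff j = k ⬝ᵥ (matPolyEquiv M).coeff j *ᵥ b := by
  simp [dotProduct, mulVec, coeff_C_mul, coeff_mul_C, matPolyEquiv_coeff_apply, Finset.mul_sum]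

theorem matPolyEquiv_adjugate_charmatrix_mul {R : Type*} [CommRing R] (A : Matrix ι ι R) :
    matPolyEquiv (charmatrix A).adjugate * (X - C A) = A.charpoly.map (algebraMap R _) := by
  rw [← matPolyEquiv_charmatrix, ← map_mul, adjugate_mul, matPolyEquiv_smul_one, charpoly]

theorem coeff_matPolyEquiv_adjugate_charmatrix {R : Type*} [CommRing R] [Nontrivial R]
    (A : Matrix ι ι R) (j : ℕ) :
    (matPolyEquiv (charmatrix A).adjugate).coeff j =
      ∑ i ∈ Finset.range (Fintype.card ι - j), A.charpoly.coeff (j + 1 + i) • A ^ i := by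
  set P := matPolyEquiv (charmatrix A).adjugate
  set d : ℕ → Matrix ι ι R :=
    fun j => ∑ i ∈ Finset.range (Fintype.card ι - j), A.charpoly.coeff (j + 1 + i) • A ^ i
  -- `P.coeff` and `d` obey the same recursion `e j = e (j + 1) * A + χ_{j+1} • 1`, read off
  -- from `P * (X - C A) = χ_A`, and both vanish for large `j`.
  have hP : ∀ j, P.coeff j = P.coeff (j + 1) * A + A.charpoly.coeff (j + 1) • 1 := fun j => by
    have h := congrArg (coeff · (j + 1)) (matPolyEquiv_adjugate_charmatrix_mul A)
    simp only [mul_sub, coeff_sub, coeff_mul_X, coeff_mul_C, coeff_map,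
      Algebra.algebraMap_eq_smul_one] at h
    rw [← h, add_sub_cancel]
  have hd : ∀ j, d j = d (j + 1) * A + A.charpoly.coeff (j + 1) • 1 := fun j => by
    rcases lt_or_ge j (Fintype.card ι) with hj | hj
    · simp only [d, show Fintype.card ι - j = Fintype.card ι - (j + 1) + 1 by omega,
        Finset.sum_range_succ', Finset.sum_mul, smul_mul_assoc, ← pow_succ, pow_zero, add_zero]
      congr 1
      exact Finset.sum_congr rfl fun i _ => by ring_nf
    · have hχ : A.charpoly.coeff (j + 1) = 0 :=
        coeff_eq_zero_of_natDegree_lt (by rw [charpoly_natDegree_eq_dim]; omega)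
      simp [d, Nat.sub_eq_zero_of_le hj, hχ, show Fintype.card ι - (j + 1) = 0 by omega]
  have hdiff : ∀ N j, P.coeff j - d j = (P.coeff (j + N) - d (j + N)) * A ^ N := by
    intro N
    induction N with
    | zero => simp
    | succ N ih =>
      intro j
      rw [ih, hP (j + N), hd (j + N), pow_succ', ← mul_assoc, ← add_assoc]
      congr 1
      noncomm_ring
  set N := P.natDegree + Fintype.card ι + 1
  have hPN : P.coeff (j + N) = 0 := coeff_eq_zero_of_natDegree_lt (by omega)
  have hdN : d (j + N) = 0 := by simp [d, show Fintype.card ι - (j + N) = 0 by omega]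
  rw [← sub_eq_zero, hdiff N, hPN, hdN, sub_zero, zero_mul]

theorem coeff_charpoly_add_vecMulVec {K : Type*} [Field K] (A : Matrix ι ι K) (b k : ι → K)
    (j : ℕ) : (A + vecMulVec b k).charpoly.coeff j =
      A.charpoly.coeff j - k ⬝ᵥ (matPolyEquiv (charmatrix A).adjugate).coeff j *ᵥ b := by
  rw [charpoly, charmatrix_add_vecMulVec, det_add_vecMulVec (charpoly_monic A).ne_zero, mulVec_neg,
    dotProduct_neg, coeff_add, coeff_neg, coeff_comp_C_dotProduct_mulVec, ← sub_eq_add_neg, charpoly]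

end Matrix

variable {K : Type*} [Field K] {n : ℕ}

theorem span_adjugate_coeff_mulVec_eq_top {A : Matrix (Fin n) (Fin n) K} {b : Fin n → K}
    (hb : span K (range fun t : Fin n => A ^ (t : ℕ) *ᵥ b) = ⊤) :
    span K (range fun j : Fin n => (matPolyEquiv (charmatrix A).adjugate).coeff j *ᵥ b) = ⊤ := by
  set S := span K (range fun j : Fin n => (matPolyEquiv (charmatrix A).adjugate).coeff j *ᵥ b)
  suffices h : ∀ t < n, A ^ t *ᵥ b ∈ S by
    rw [eq_top_iff, ← hb, span_le]
    rintro _ ⟨t, rfl⟩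
    exact h t t.isLt
  intro t
  induction t using Nat.strong_induction_on with
  | _ t ih =>
    intro ht
    -- The adjugate coefficient of index `n - 1 - t` is `A ^ t` plus lower powers of `A`.
    have hcoeff := coeff_matPolyEquiv_adjugate_charmatrix A (n - 1 - t)
    have hχ : A.charpoly.coeff n = 1 := by simpa using (charpoly_monic A).coeff_natDegree
    rw [Fintype.card_fin, show n - (n - 1 - t) = t + 1 by omega, Finset.sum_range_succ,
      show n - 1 - t + 1 + t = n by omega, hχ, one_smul] at hcoeff
    rw [eq_sub_of_add_eq' hcoeff.symm, sub_mulVec, sum_mulVec]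
    refine sub_mem (subset_span ⟨⟨n - 1 - t, by omega⟩, rfl⟩) (sum_mem fun i hi => ?_)
    rw [smul_mulVec]
    exact smul_mem _ _ (ih i (Finset.mem_range.mp hi) (by simp at hi; omega))

theorem exists_charpoly_add_vecMulVec_eq {A : Matrix (Fin n) (Fin n) K} {b : Fin n → K}
    (hb : span K (range fun t : Fin n => A ^ (t : ℕ) *ᵥ b) = ⊤) {Δ : K[X]} (hΔ : Δ.Monic)
    (hdeg : Δ.natDegree = n) : ∃ k, (A + vecMulVec b k).charpoly = Δ := by
  have hunit : IsUnit (Matrix.of fun j : Fin n =>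
      (matPolyEquiv (charmatrix A).adjugate).coeff j *ᵥ b) := by
    rw [← linearIndependent_rows_iff_isUnit]
    exact linearIndependent_of_top_le_span_of_card_eq_finrank
      (span_adjugate_coeff_mulVec_eq_top hb).ge (by simp)
  obtain ⟨k, hk⟩ := mulVec_surjective_iff_isUnit.mpr hunit fun j => (A.charpoly - Δ).coeff j
  refine ⟨k, Polynomial.ext fun j => ?_⟩
  rw [coeff_charpoly_add_vecMulVec]
  rcases lt_or_ge j n with hj | hj
  · have hkj : ((matPolyEquiv (charmatrix A).adjugate).coeff j *ᵥ b) ⬝ᵥ k =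
        (A.charpoly - Δ).coeff j := congrFun hk ⟨j, hj⟩
    rw [dotProduct_comm, hkj, coeff_sub, sub_sub_cancel]
  · have hχ : A.charpoly.coeff j = Δ.coeff j := by
      rcases hj.eq_or_lt with rfl | hj
      · have hΔn : Δ.coeff n = 1 := hdeg ▸ hΔ.coeff_natDegree
        rw [hΔn]
        simpa using (charpoly_monic A).coeff_natDegree
      · rw [coeff_eq_zero_of_natDegree_lt (by simpa using hj),
          coeff_eq_zero_of_natDegree_lt (hdeg ▸ hj)]
    simp [coeff_matPolyEquiv_adjugate_charmatrix, Nat.sub_eq_zero_of_le hj, hχ]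

section Controllability

variable {κ : Type*} [Fintype κ]

def trajectory {ι : Type*} [Fintype ι] (A : Matrix ι ι K) (B : Matrix ι κ K) (u : ℕ → κ → K) :
    ℕ → ι → K
  | 0 => 0
  | i + 1 => A *ᵥ trajectory A B u i + B *ᵥ u i

theorem trajectory_update {ι : Type*} [Fintype ι] (A : Matrix ι ι K) (B : Matrix ι κ K)
    (u : ℕ → κ → K) {i k : ℕ} (hi : i ≤ k) (w : κ → K) :
    trajectory A B (Function.update u k w) i = trajectory A B u i := by
  induction i with
  | zero => rfl
  | succ i ih =>
    simp only [trajectory, ih (by omega), Function.update_of_ne (show i ≠ k by omega)]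

def Controllable (A : Matrix (Fin n) (Fin n) K) (B : Matrix (Fin n) κ K) : Prop :=
  span K (range fun p : Fin n × κ => (A ^ (p.1 : ℕ) * B).col p.2) = ⊤

variable {A : Matrix (Fin n) (Fin n) K} {B : Matrix (Fin n) κ K}

theorem Controllable.eq_top_of_invariant [DecidableEq κ] (hAB : Controllable A B)
    {V : Submodule K (Fin n → K)} (hB : ∀ w, B *ᵥ w ∈ V) (hA : ∀ v ∈ V, A *ᵥ v ∈ V) :
    V = ⊤ := by
  have hpow : ∀ (j : ℕ), ∀ v ∈ V, A ^ j *ᵥ v ∈ V := by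
    intro j
    induction j with
    | zero => simp
    | succ j ih => intro v hv; rw [pow_succ', ← mulVec_mulVec]; exact hA _ (ih v hv)
  rw [eq_top_iff, ← hAB, span_le]
  rintro _ ⟨⟨j, l⟩, rfl⟩
  show (A ^ (j : ℕ) * B).col l ∈ V
  rw [← mulVec_single_one, ← mulVec_mulVec]
  exact hpow j _ (hB _)

theorem Controllable.exists_linearIndependent_trajectory [DecidableEq κ] (hAB : Controllable A B) :
    ∀ k ≤ n, ∃ u, LinearIndependent K fun i : Fin k => trajectory A B u (i + 1) := by
  intro k
  induction k with
  | zero => exact fun _ => ⟨0, linearIndependent_empty_type⟩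
  | succ k ih =>
    intro hk
    obtain ⟨u, hu⟩ := ih (by omega)
    set V := span K (range fun i : Fin k => trajectory A B u (i + 1))
    -- If no input moved the state out of `V`, then `V` would be `A`-invariant and contain the
    -- range of `B`, hence everything; but `dim V = k < n`.
    obtain ⟨w, hw⟩ : ∃ w, A *ᵥ trajectory A B u k + B *ᵥ w ∉ V := by
      by_contra! hV
      have hB : ∀ w, B *ᵥ w ∈ V := fun w => by
        simpa using sub_mem (hV w) (hV 0)
      have hA : ∀ v ∈ V, A *ᵥ v ∈ V := by
        suffices V ≤ V.comap (toLin' A) from fun v hv => this hv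
        refine span_le.mpr (range_subset_iff.mpr fun i => ?_)
        show A *ᵥ trajectory A B u (i + 1) ∈ V
        rcases lt_or_eq_of_le (show (i : ℕ) + 1 ≤ k from i.isLt) with hi | hi
        · have hnext : trajectory A B u (i + 1 + 1) ∈ V := subset_span ⟨⟨i + 1, hi⟩, rfl⟩
          simpa [trajectory] using sub_mem hnext (hB (u (i + 1)))
        · rw [hi]
          simpa using hV 0
      have hdim : Module.finrank K V = k := by simpa using finrank_span_eq_card hu
      rw [hAB.eq_top_of_invariant hB hA, finrank_top, Module.finrank_fin_fun] at hdim
      omega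
    have hinit : Fin.init (fun i : Fin (k + 1) => trajectory A B (Function.update u k w) (i + 1)) =
        fun i : Fin k => trajectory A B u (i + 1) :=
      funext fun i => trajectory_update A B u i.isLt w
    have hlast : trajectory A B (Function.update u k w) (k + 1) =
        A *ᵥ trajectory A B u k + B *ᵥ w := by
      simp [trajectory, trajectory_update A B u le_rfl]
    refine ⟨Function.update u k w, linearIndependent_finSucc'.mpr ⟨hinit ▸ hu, ?_⟩⟩
    rw [hinit]
    simpa [hlast] using hw

/-- Heymann's lemma. -/
theorem Controllable.exists_feedback_cyclic [DecidableEq κ] (hAB : Controllable A B) :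
    ∃ (F : Matrix κ (Fin n) K) (u : κ → K),
      span K (range fun t : Fin n => (A + B * F) ^ (t : ℕ) *ᵥ (B *ᵥ u)) = ⊤ := by
  obtain ⟨u, hu⟩ := hAB.exists_linearIndependent_trajectory n le_rfl
  have hspan : span K (range fun i : Fin n => trajectory A B u (i + 1)) = ⊤ :=
    eq_top_of_finrank_eq ((finrank_span_eq_card hu).trans (by simp))
  let F := LinearMap.toMatrix' ((Module.Basis.mk hu hspan.ge).constr K fun i => u (i + 1))
  have hstep : ∀ i < n, (A + B * F) *ᵥ trajectory A B u (i + 1) = trajectory A B u (i + 1 + 1) := by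
    intro i hi
    have hF : F *ᵥ trajectory A B u (i + 1) = u (i + 1) := by
      rw [LinearMap.toMatrix'_mulVec, ← Module.Basis.mk_apply hu hspan.ge ⟨i, hi⟩,
        Module.Basis.constr_basis]
    rw [add_mulVec, ← mulVec_mulVec, hF]
    rfl
  have hpow : ∀ t < n, (A + B * F) ^ t *ᵥ (B *ᵥ u 0) = trajectory A B u (t + 1) := by
    intro t
    induction t with
    | zero => simp [trajectory]
    | succ t ih =>
      intro ht
      rw [pow_succ', ← mulVec_mulVec, ih (by omega), hstep t (by omega)]
  exact ⟨F, u 0, by simpa [hpow _ (Fin.is_lt _)] using hspan⟩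

theorem controllable_of_rank_ctrbMat {m : ℕ} {A : Matrix (Fin n) (Fin n) ℝ}
    {B : Matrix (Fin n) (Fin m) ℝ} (h : (ctrbMat n m A B).rank = n) : Controllable A B :=
  eq_top_of_finrank_eq (((rank_eq_finrank_span_cols _).symm.trans h).trans (by simp))

end Controllability

/-- MIMO pole assignment (Proposition 2.34): if `(A, B)` is controllable, then for
every monic real polynomial `Δ̄` of degree `n` there exists a matrix `K` with
`charpoly (A + B K) = Δ̄`. -/
theorem mimo_pole_assignment
    (n m : ℕ) (A : Matrix (Fin n) (Fin n) ℝ) (B : Matrix (Fin n) (Fin m) ℝ)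
    (hctrb : (ctrbMat n m A B).rank = n) :
    ∀ Δ : Polynomial ℝ, Δ.Monic → Δ.natDegree = n →
      ∃ K : Matrix (Fin m) (Fin n) ℝ, (A + B * K).charpoly = Δ := by
  intro Δ hΔ hdeg
  obtain ⟨F, u, hcyc⟩ := (controllable_of_rank_ctrbMat hctrb).exists_feedback_cyclic
  obtain ⟨k, hk⟩ := exists_charpoly_add_vecMulVec_eq hcyc hΔ hdeg
  exact ⟨F + vecMulVec u k, by rw [Matrix.mul_add, mul_vecMulVec, ← add_assoc, hk]⟩
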